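/- arXiv:1701.08238 — 3 statements merged into one kernel-verified Lean document; each statement's English description precedes it below -/
import Mathlib

section
/- Let a, c, d be positive integers. If, in the polynomial ring ℤ[X], (1 - X^d) - X^a·(1 - X^c) + X^(c+2d)·(1 - X^c) - X^(a+2c+d)·(1 - X^d) = (1 - X^a)(1 - X^c)(1 - X^d)(1 - X^(c+d)), then c = a + d. -/
open Polynomial

theorem stmt_4 (a c d : ℕ) (ha : 0 < a) (hc : 0 < c) (hd : 0 < d)
    (h : (1 - (X : ℤ[X]) ^ d) - X ^ a * (1 - X ^ c) + X ^ (c + 2 * d) * (1 - X ^ c)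
          - X ^ (a + 2 * c + d) * (1 - X ^ d)
        = (1 - X ^ a) * (1 - X ^ c) * (1 - X ^ d) * (1 - X ^ (c + d))) :
    c = a + d := by
  have h' : (X : ℤ[X]) ^ c + X ^ (a + c + 2 * d) = X ^ (a + d) + X ^ (2 * c + d) := by
    simp only [pow_add, pow_mul] at h ⊢
    linear_combination h
  by_contra hne
  have := congrArg (fun p => p.coeff c) h'
  simp only [coeff_add, coeff_X_pow] at this
  have h1 : c ≠ a + c + 2 * d := by omega
  have h2 : c ≠ a + d := by omega
  have h3 : c ≠ 2 * c + d := by omega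
  simp [h1, h2, h3] at this
end

section
/- Let m₁, m₂, m₃, m₄ be positive integers and let n_{i,j} be positive integers for i ∈ {1,2,3,4} and j ∈ {1,2,3}. Suppose that, in the polynomial ring ℤ[X], X^{m₁}·∏_{j=1}^{3}(1 - X^{n_{1,j}}) + X^{m₂}·∏_{j=1}^{3}(1 - X^{n_{2,j}}) = X^{m₃}·∏_{j=1}^{3}(1 - X^{n_{3,j}}) + X^{m₄}·∏_{j=1}^{3}(1 - X^{n_{4,j}}). Then min(m₁, m₂) = min(m₃, m₄) and max(m₁ + n_{1,1} + n_{1,2} + n_{1,3}, m₂ + n_{2,1} + n_{2,2} + n_{2,3}) = max(m₃ + n_{3,1} + n_{3,2} + n_{3,3}, m₄ + n_{4,1} + n_{4,2} + n_{4,3}). -/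
open Polynomial

private noncomputable def F (m a b c : ℕ) : ℤ[X] := X ^ m * ((1 - X ^ a) * (1 - X ^ b) * (1 - X ^ c))

private lemma F_expand (m a b c : ℕ) :
    F m a b c = X ^ m - X ^ (m + a) - X ^ (m + b) - X ^ (m + c)
      + X ^ (m + a + b) + X ^ (m + a + c) + X ^ (m + b + c) - X ^ (m + a + b + c) := by
  unfold F; ring

private lemma F_coeff_lt {m k : ℕ} (a b c : ℕ) (h : k < m) : (F m a b c).coeff k = 0 := by
  rw [F_expand]
  simp only [coeff_sub, coeff_add, coeff_X_pow]
  split_ifs <;> omega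

private lemma F_coeff_m {m a b c : ℕ} (ha : 0 < a) (hb : 0 < b) (hc : 0 < c) :
    (F m a b c).coeff m = 1 := by
  rw [F_expand]
  simp only [coeff_sub, coeff_add, coeff_X_pow]
  split_ifs <;> omega

private lemma F_coeff_gt {m a b c k : ℕ} (h : m + a + b + c < k) : (F m a b c).coeff k = 0 := by
  rw [F_expand]
  simp only [coeff_sub, coeff_add, coeff_X_pow]
  split_ifs <;> omega

private lemma F_coeff_top {m a b c : ℕ} (ha : 0 < a) (hb : 0 < b) (hc : 0 < c) :
    (F m a b c).coeff (m + a + b + c) = -1 := by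
  rw [F_expand]
  simp only [coeff_sub, coeff_add, coeff_X_pow]
  split_ifs <;> omega

private lemma G_min_ne {m a b c m' a' b' c' : ℕ}
    (ha : 0 < a) (hb : 0 < b) (hc : 0 < c) (ha' : 0 < a') (hb' : 0 < b') (hc' : 0 < c') :
    (F m a b c + F m' a' b' c').coeff (min m m') ≠ 0 := by
  rw [coeff_add]
  rcases lt_trichotomy m m' with h | h | h
  · rw [min_eq_left h.le, F_coeff_m ha hb hc, F_coeff_lt a' b' c' h]; norm_num
  · subst h
    rw [min_self, F_coeff_m ha hb hc, F_coeff_m ha' hb' hc']; norm_num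
  · rw [min_eq_right h.le, F_coeff_m ha' hb' hc', F_coeff_lt a b c h]; norm_num

private lemma G_min_zero {m a b c m' a' b' c' k : ℕ} (h : k < min m m') :
    (F m a b c + F m' a' b' c').coeff k = 0 := by
  rw [coeff_add, F_coeff_lt a b c (lt_of_lt_of_le h (min_le_left _ _)),
    F_coeff_lt a' b' c' (lt_of_lt_of_le h (min_le_right _ _))]
  ring

private lemma G_max_ne {m a b c m' a' b' c' : ℕ}
    (ha : 0 < a) (hb : 0 < b) (hc : 0 < c) (ha' : 0 < a') (hb' : 0 < b') (hc' : 0 < c') :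
    (F m a b c + F m' a' b' c').coeff (max (m + a + b + c) (m' + a' + b' + c')) ≠ 0 := by
  rw [coeff_add]
  rcases lt_trichotomy (m + a + b + c) (m' + a' + b' + c') with h | h | h
  · rw [max_eq_right h.le, F_coeff_top ha' hb' hc', F_coeff_gt h]; norm_num
  · rw [max_eq_left h.ge, F_coeff_top ha hb hc, h, F_coeff_top ha' hb' hc']; norm_num
  · rw [max_eq_left h.le, F_coeff_top ha hb hc, F_coeff_gt h]; norm_num

private lemma G_max_zero {m a b c m' a' b' c' k : ℕ}
    (h : max (m + a + b + c) (m' + a' + b' + c') < k) :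
    (F m a b c + F m' a' b' c').coeff k = 0 := by
  rw [coeff_add, F_coeff_gt (lt_of_le_of_lt (le_max_left _ _) h),
    F_coeff_gt (lt_of_le_of_lt (le_max_right _ _) h)]
  ring

private lemma key {p q : ℤ[X]} {t t' : ℕ} (hpq : p = q)
    (h1 : p.coeff t ≠ 0) (h2 : ∀ k, t < k → p.coeff k = 0)
    (h1' : q.coeff t' ≠ 0) (h2' : ∀ k, t' < k → q.coeff k = 0) : t = t' := by
  rcases lt_trichotomy t t' with h | h | h
  · exact absurd (hpq ▸ h2 t' h) h1'
  · exact h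
  · exact absurd (hpq ▸ h2' t h) h1

private lemma key' {p q : ℤ[X]} {t t' : ℕ} (hpq : p = q)
    (h1 : p.coeff t ≠ 0) (h2 : ∀ k, k < t → p.coeff k = 0)
    (h1' : q.coeff t' ≠ 0) (h2' : ∀ k, k < t' → q.coeff k = 0) : t = t' := by
  rcases lt_trichotomy t t' with h | h | h
  · exact absurd (hpq ▸ h2' t h) h1
  · exact h
  · exact absurd (hpq ▸ h2 t' h) h1'

theorem stmt_7 (m : Fin 4 → ℕ) (n : Fin 4 → Fin 3 → ℕ)
    (hm : ∀ i, 0 < m i) (hn : ∀ i j, 0 < n i j)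
    (h : (X : ℤ[X]) ^ m 0 * ∏ j, (1 - X ^ n 0 j) + X ^ m 1 * ∏ j, (1 - X ^ n 1 j)
        = X ^ m 2 * ∏ j, (1 - X ^ n 2 j) + X ^ m 3 * ∏ j, (1 - X ^ n 3 j)) :
    min (m 0) (m 1) = min (m 2) (m 3) ∧
      max (m 0 + ∑ j, n 0 j) (m 1 + ∑ j, n 1 j)
        = max (m 2 + ∑ j, n 2 j) (m 3 + ∑ j, n 3 j) := by
  simp only [Fin.prod_univ_three] at h
  have h' : F (m 0) (n 0 0) (n 0 1) (n 0 2) + F (m 1) (n 1 0) (n 1 1) (n 1 2)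
      = F (m 2) (n 2 0) (n 2 1) (n 2 2) + F (m 3) (n 3 0) (n 3 1) (n 3 2) := h
  constructor
  · exact key' h'
      (G_min_ne (hn 0 0) (hn 0 1) (hn 0 2) (hn 1 0) (hn 1 1) (hn 1 2))
      (fun k hk => G_min_zero hk)
      (G_min_ne (hn 2 0) (hn 2 1) (hn 2 2) (hn 3 0) (hn 3 1) (hn 3 2))
      (fun k hk => G_min_zero hk)
  · simp only [Fin.sum_univ_three, ← add_assoc]
    exact key h'
      (G_max_ne (hn 0 0) (hn 0 1) (hn 0 2) (hn 1 0) (hn 1 1) (hn 1 2))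
      (fun k hk => G_max_zero hk)
      (G_max_ne (hn 2 0) (hn 2 1) (hn 2 2) (hn 3 0) (hn 3 1) (hn 3 2))
      (fun k hk => G_max_zero hk)
end

section
/- Let a, b, c be positive integers with b < a, c < a and b + c ≤ a. If, in the polynomial ring ℤ[X], -X^a·(1 - X^(b+c))(1 - X^(a-b))(1 - X^(a-c)) - X^(b+c)·(1 - X^a)(1 - X^b)(1 - X^c) + X^(2a-b-c)·(1 - X^(b+c))(1 - X^b)(1 - X^c) + X^(b+c)·(1 - X^a)(1 - X^(a-b))(1 - X^(a-c)) = 0, then a = b + c. -/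
open Polynomial

lemma aux11 (b c f : ℕ) (hb : 0 < b) (hc : 0 < c) (hf : 0 < f) (hbc : b ≤ c)
    (h : (X : ℤ[X]) ^ (b+2*c) + X ^ (2*b+c) + X ^ (2*b+2*c+f) + X ^ (3*b+3*c+f)
        + X ^ (b+c+2*f) + X ^ (2*b+2*c+2*f) + X ^ (2*b+3*c+2*f) + X ^ (3*b+2*c+2*f)
        - X ^ (2*b+2*c) - X ^ (b+c+f) - X ^ (b+2*c+f) - X ^ (2*b+c+f)
        - X ^ (2*b+3*c+f) - X ^ (3*b+2*c+f) - X ^ (3*b+3*c+2*f) - X ^ (2*b+2*c+3*f) = 0) :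
    False := by
  -- coefficient at 2b+c forces f = b and b < c
  have h1 := congrArg (fun p => Polynomial.coeff p (2*b+c)) h
  simp only [coeff_add, coeff_sub, coeff_X_pow, coeff_zero, if_true] at h1
  rw [if_neg (show ¬(2*b+c = 2*b+2*c+f) by omega),
      if_neg (show ¬(2*b+c = 3*b+3*c+f) by omega),
      if_neg (show ¬(2*b+c = 2*b+2*c+2*f) by omega),
      if_neg (show ¬(2*b+c = 2*b+3*c+2*f) by omega),
      if_neg (show ¬(2*b+c = 3*b+2*c+2*f) by omega),
      if_neg (show ¬(2*b+c = 2*b+2*c) by omega),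
      if_neg (show ¬(2*b+c = b+2*c+f) by omega),
      if_neg (show ¬(2*b+c = 2*b+c+f) by omega),
      if_neg (show ¬(2*b+c = 2*b+3*c+f) by omega),
      if_neg (show ¬(2*b+c = 3*b+2*c+f) by omega),
      if_neg (show ¬(2*b+c = 3*b+3*c+2*f) by omega),
      if_neg (show ¬(2*b+c = 2*b+2*c+3*f) by omega)] at h1
  have hfb : b = f ∧ b < c := by split_ifs at h1 <;> omega
  obtain ⟨hfb, hblc⟩ := hfb
  subst hfb
  -- coefficient at b+2c gives 1 = 0
  have h2 := congrArg (fun p => Polynomial.coeff p (b+2*c)) h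
  simp only [coeff_add, coeff_sub, coeff_X_pow, coeff_zero, if_true] at h2
  rw [if_neg (show ¬(b+2*c = 2*b+c) by omega),
      if_neg (show ¬(b+2*c = 2*b+2*c+b) by omega),
      if_neg (show ¬(b+2*c = 3*b+3*c+b) by omega),
      if_neg (show ¬(b+2*c = 2*b+2*c+2*b) by omega),
      if_neg (show ¬(b+2*c = 2*b+3*c+2*b) by omega),
      if_neg (show ¬(b+2*c = 3*b+2*c+2*b) by omega),
      if_neg (show ¬(b+2*c = 2*b+2*c) by omega),
      if_neg (show ¬(b+2*c = b+c+b) by omega),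
      if_neg (show ¬(b+2*c = b+2*c+b) by omega),
      if_neg (show ¬(b+2*c = 2*b+3*c+b) by omega),
      if_neg (show ¬(b+2*c = 3*b+2*c+b) by omega),
      if_neg (show ¬(b+2*c = 3*b+3*c+2*b) by omega),
      if_neg (show ¬(b+2*c = 2*b+2*c+3*b) by omega)] at h2
  split_ifs at h2 <;> omega

theorem stmt_11 (a b c : ℕ) (ha : 0 < a) (hb : 0 < b) (hc : 0 < c)
    (hba : b < a) (hca : c < a) (hbca : b + c ≤ a)
    (h : -((X : ℤ[X]) ^ a) * ((1 - X ^ (b + c)) * (1 - X ^ (a - b)) * (1 - X ^ (a - c)))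
        - X ^ (b + c) * ((1 - X ^ a) * (1 - X ^ b) * (1 - X ^ c))
        + X ^ (2 * a - b - c) * ((1 - X ^ (b + c)) * (1 - X ^ b) * (1 - X ^ c))
        + X ^ (b + c) * ((1 - X ^ a) * (1 - X ^ (a - b)) * (1 - X ^ (a - c))) = 0) :
    a = b + c := by
  obtain ⟨f, hf⟩ : ∃ f, a = b + c + f := ⟨a - (b + c), by omega⟩
  subst hf
  rw [show b + c + f - b = c + f by omega, show b + c + f - c = b + f by omega,
      show 2 * (b + c + f) - b - c = b + c + 2 * f by omega] at h
  rcases Nat.eq_zero_or_pos f with hf0 | hfpos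
  · omega
  exfalso
  have key : (X : ℤ[X]) ^ (b+2*c) + X ^ (2*b+c) + X ^ (2*b+2*c+f) + X ^ (3*b+3*c+f)
        + X ^ (b+c+2*f) + X ^ (2*b+2*c+2*f) + X ^ (2*b+3*c+2*f) + X ^ (3*b+2*c+2*f)
        - X ^ (2*b+2*c) - X ^ (b+c+f) - X ^ (b+2*c+f) - X ^ (2*b+c+f)
        - X ^ (2*b+3*c+f) - X ^ (3*b+2*c+f) - X ^ (3*b+3*c+2*f) - X ^ (2*b+2*c+3*f) = 0 := by
    rw [← h]; ring
  rcases le_total b c with hbc | hbc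
  · exact aux11 b c f hb hc hfpos hbc key
  · exact aux11 c b f hc hb hfpos hbc (by linear_combination key)
end
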